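/- Let RecPoint ≡ λc.Point where Point ≡ λx.λself.⟨X=x, get=self.X⟩, σ₁ = ⟨X:Int⟩, σ₂ = ⟨X:Int, get:Int⟩, κ₁ = Int → (ω→σ₁) ∩ (σ₁→σ₂). Then ⊢ RecPoint : ω → κ₁, and x:Int ⊢ Y(Y RecPoint x) : σ₂, where Y is Curry's fixed point combinator. -/
import Mathlib


/-- Intersection types with record types: σ,τ ::= α | t | ω | σ→τ | σ∩τ | ⟨a:σ⟩. -/
inductive Ty : Type
  | tvar : ℕ → Ty
  | tconst : ℕ → Ty
  | omega : Ty
  | arrow : Ty → Ty → Ty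
  | inter : Ty → Ty → Ty
  | rcd : ℕ → Ty → Ty

/-- The type-inclusion preorder (BCD extended with record axioms). -/
inductive Subt : Ty → Ty → Prop
  | refl (σ) : Subt σ σ
  | trans {σ τ ρ} : Subt σ τ → Subt τ ρ → Subt σ ρ
  | top (σ) : Subt σ .omega
  | omegaArrow : Subt .omega (.arrow .omega .omega)
  | interLeft (σ τ) : Subt (.inter σ τ) σ
  | interRight (σ τ) : Subt (.inter σ τ) τ
  | arrowInter (σ τ₁ τ₂) : Subt (.inter (.arrow σ τ₁) (.arrow σ τ₂)) (.arrow σ (.inter τ₁ τ₂))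
  | interGlb {σ τ₁ τ₂} : Subt σ τ₁ → Subt σ τ₂ → Subt σ (.inter τ₁ τ₂)
  | arrowMono {σ₁ σ₂ τ₁ τ₂} : Subt σ₂ σ₁ → Subt τ₁ τ₂ → Subt (.arrow σ₁ τ₁) (.arrow σ₂ τ₂)
  | rcdMono {a σ τ} : Subt σ τ → Subt (.rcd a σ) (.rcd a τ)
  | rcdInter (a σ τ) : Subt (.inter (.rcd a σ) (.rcd a τ)) (.rcd a (.inter σ τ))

/-- A finite intersection ⋂ᵢ ⟨aᵢ:σᵢ⟩ of record types (ω for the empty list). -/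
def recTy : List (ℕ × Ty) → Ty
  | [] => .omega
  | [(a, σ)] => .rcd a σ
  | (a, σ) :: t => .inter (.rcd a σ) (recTy t)

mutual
/-- Terms of Λ_R. -/
inductive Tm : Type
  | var : ℕ → Tm
  | lit : ℤ → Tm
  | lam : ℕ → Tm → Tm
  | app : Tm → Tm → Tm
  | rcd : Rcd → Tm
  | sel : Tm → ℕ → Tm
  | mrg : Tm → Rcd → Tm
/-- Record terms. -/
inductive Rcd : Type
  | nil : Rcd
  | cons : ℕ → Tm → Rcd → Rcd
end

def Rcd.find : Rcd → ℕ → Option Tm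
  | .nil, _ => none
  | .cons a M r, b => if a = b then some M else r.find b

def Rcd.lbls : Rcd → List ℕ
  | .nil => []
  | .cons a _ r => a :: r.lbls

def Rcd.restrict : Rcd → List ℕ → Rcd
  | .nil, _ => .nil
  | .cons a M r, L => if a ∈ L then r.restrict L else .cons a M (r.restrict L)

def Rcd.append : Rcd → Rcd → Rcd
  | .nil, s => s
  | .cons a M r, s => .cons a M (r.append s)

/-- The merge of two records: fields of `s` override those of `r`. -/
def Rcd.mergeR (r s : Rcd) : Rcd := (r.restrict s.lbls).append s

mutual
def Tm.subst : Tm → ℕ → Tm → Tm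
  | .var y, x, N => if y = x then N else .var y
  | .lit n, _, _ => .lit n
  | .lam y M, x, N => if y = x then .lam y M else .lam y (M.subst x N)
  | .app M₁ M₂, x, N => .app (M₁.subst x N) (M₂.subst x N)
  | .rcd r, x, N => .rcd (r.substR x N)
  | .sel M a, x, N => .sel (M.subst x N) a
  | .mrg M r, x, N => .mrg (M.subst x N) (r.substR x N)
def Rcd.substR : Rcd → ℕ → Tm → Rcd
  | .nil, _, _ => .nil
  | .cons a M r, x, N => .cons a (M.subst x N) (r.substR x N)
end

mutual
def Tm.fv : Tm → List ℕ
  | .var y => [y]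
  | .lit _ => []
  | .lam y M => M.fv.filter (fun z => z ≠ y)
  | .app M N => M.fv ++ N.fv
  | .rcd r => r.fvR
  | .sel M _ => M.fv
  | .mrg M r => M.fv ++ r.fvR
def Rcd.fvR : Rcd → List ℕ
  | .nil => []
  | .cons _ M r => M.fv ++ r.fvR
end

mutual
/-- One-step reduction: β, record selection, record merge, closed under contexts. -/
inductive Red : Tm → Tm → Prop
  | beta (x M N) : Red (.app (.lam x M) N) (M.subst x N)
  | rsel {r : Rcd} {a M} : r.find a = some M → Red (.sel (.rcd r) a) M
  | mergeRed (r s : Rcd) : Red (.mrg (.rcd r) s) (.rcd (r.mergeR s))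
  | lamC {x M M'} : Red M M' → Red (.lam x M) (.lam x M')
  | appL {M M' N} : Red M M' → Red (.app M N) (.app M' N)
  | appR {M N N'} : Red N N' → Red (.app M N) (.app M N')
  | rcdC {r r'} : RedR r r' → Red (.rcd r) (.rcd r')
  | selC {M M' a} : Red M M' → Red (.sel M a) (.sel M' a)
  | mrgL {M M' r} : Red M M' → Red (.mrg M r) (.mrg M' r)
  | mrgR {M r r'} : RedR r r' → Red (.mrg M r) (.mrg M r')
inductive RedR : Rcd → Rcd → Prop
  | head {a M M' r} : Red M M' → RedR (.cons a M r) (.cons a M' r)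
  | tail {a M r r'} : RedR r r' → RedR (.cons a M r) (.cons a M r')
end

def IntTy : Ty := .tconst 0

/-- The intersection type assignment system for Λ_R. -/
inductive Der : (ℕ → Ty) → Tm → Ty → Prop
  | var (Γ x) : Der Γ (.var x) (Γ x)
  | lit (Γ n) : Der Γ (.lit n) IntTy
  | lamI {Γ x M σ τ} : Der (Function.update Γ x σ) M τ → Der Γ (.lam x M) (.arrow σ τ)
  | appE {Γ M N σ τ} : Der Γ M (.arrow σ τ) → Der Γ N σ → Der Γ (.app M N) τ
  | top (Γ M) : Der Γ M .omega
  | interI {Γ M σ τ} : Der Γ M σ → Der Γ M τ → Der Γ M (.inter σ τ)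
  | sub {Γ M σ τ} : Der Γ M σ → Subt σ τ → Der Γ M τ
  | sel {Γ M a σ} : Der Γ M (.rcd a σ) → Der Γ (.sel M a) σ
  | rcdI {Γ} {r : Rcd} {a M σ} : r.find a = some M → Der Γ M σ → Der Γ (.rcd r) (.rcd a σ)
  | mrgL {Γ M} {r : Rcd} {a σ} : Der Γ M (.rcd a σ) → a ∉ r.lbls → Der Γ (.mrg M r) (.rcd a σ)
  | mrgR {Γ M} {r : Rcd} {a σ} : Der Γ (.rcd r) (.rcd a σ) → Der Γ (.mrg M r) (.rcd a σ)

/-- Curry's fixed point combinator Y ≡ λf.(λx.f(xx))(λx.f(xx)). -/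
def Ycomb : Tm :=
  .lam 0 (.app (.lam 1 (.app (.var 0) (.app (.var 1) (.var 1))))
               (.lam 1 (.app (.var 0) (.app (.var 1) (.var 1)))))

/-- Labels: X is 0, get is 1. Variables: x is 0, self is 1. -/
def lblX : ℕ := 0
def lblGet : ℕ := 1

/-- Point ≡ λx.λself.⟨X = x, get = self.X⟩. -/
def Point : Tm :=
  .lam 0 (.lam 1 (.rcd (.cons lblX (.var 0) (.cons lblGet (.sel (.var 1) lblX) .nil))))

/-- σ₁ = ⟨X:Int⟩. -/
def sig1 : Ty := .rcd lblX IntTy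
/-- σ₂ = ⟨X:Int, get:Int⟩ = ⟨X:Int⟩ ∩ ⟨get:Int⟩. -/
def sig2 : Ty := .inter (.rcd lblX IntTy) (.rcd lblGet IntTy)

/-- RecPoint ≡ λc.Point (c does not occur in Point; c is variable 2). -/
def RecPoint : Tm := .lam 2 Point

/-- κ₁ = Int → (ω→σ₁) ∩ (σ₁→σ₂). -/
def kap1 : Ty := .arrow IntTy (.inter (.arrow .omega sig1) (.arrow sig1 sig2))

/-- Typing of Y: ((ω→τ₁)∩(τ₁→τ₂))→τ₂. -/
lemma yTyping (Γ : ℕ → Ty) (τ₁ τ₂ : Ty) :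
    Der Γ Ycomb (.arrow (.inter (.arrow .omega τ₁) (.arrow τ₁ τ₂)) τ₂) := by
  set σ : Ty := .inter (.arrow .omega τ₁) (.arrow τ₁ τ₂) with hσ
  apply Der.lamI
  set Γ₁ := Function.update Γ 0 σ with hΓ₁
  have hf : ∀ ρ, Der (Function.update Γ₁ 1 ρ) (.var 0) σ := by
    intro ρ
    have := Der.var (Function.update Γ₁ 1 ρ) 0
    simpa [hΓ₁, Function.update] using this
  have hW1 : Der Γ₁ (.lam 1 (.app (.var 0) (.app (.var 1) (.var 1))))
      (.arrow .omega τ₁) := by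
    apply Der.lamI
    exact Der.appE (Der.sub (hf _) (Subt.interLeft _ _)) (Der.top _ _)
  have hW2 : Der Γ₁ (.lam 1 (.app (.var 0) (.app (.var 1) (.var 1))))
      (.arrow (.arrow .omega τ₁) τ₂) := by
    apply Der.lamI
    have hx : Der (Function.update Γ₁ 1 (.arrow .omega τ₁)) (.var 1)
        (.arrow .omega τ₁) := by
      have := Der.var (Function.update Γ₁ 1 (.arrow .omega τ₁)) 1
      simpa [Function.update] using this
    exact Der.appE (Der.sub (hf _) (Subt.interRight _ _))
      (Der.appE hx (Der.top _ _))
  exact Der.appE hW2 hW1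

lemma yApp {Γ : ℕ → Ty} {M : Tm} {τ₁ τ₂ : Ty}
    (h : Der Γ M (.inter (.arrow .omega τ₁) (.arrow τ₁ τ₂))) :
    Der Γ (.app Ycomb M) τ₂ :=
  Der.appE (yTyping Γ τ₁ τ₂) h

lemma yAppOmega {Γ : ℕ → Ty} {M : Tm} {τ : Ty}
    (h : Der Γ M (.arrow .omega τ)) : Der Γ (.app Ycomb M) τ :=
  yApp (τ₁ := .omega)
    (Der.sub h (Subt.interGlb (Subt.arrowMono (Subt.refl _) (Subt.top _))
      (Subt.refl _)))

lemma recPointTyping (Γ : ℕ → Ty) : Der Γ RecPoint (.arrow .omega kap1) := by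
  apply Der.lamI
  set Γ' := Function.update Γ 2 Ty.omega with hΓ'
  show Der Γ' Point kap1
  apply Der.lamI
  set Γa := Function.update Γ' 0 IntTy with hΓa
  apply Der.interI
  · apply Der.lamI
    refine Der.rcdI (M := .var 0) ?_ ?_
    · rfl
    · have := Der.var (Function.update Γa 1 Ty.omega) 0
      simpa [hΓa, Function.update] using this
  · apply Der.lamI
    set Γc := Function.update Γa 1 sig1 with hΓc
    have hx : Der Γc (.var 0) IntTy := by
      have := Der.var Γc 0
      simpa [hΓc, hΓa, Function.update] using this
    have hs : Der Γc (.var 1) sig1 := by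
      have := Der.var Γc 1
      simpa [hΓc, Function.update] using this
    refine Der.interI (Der.rcdI (a := lblX) (M := .var 0) ?_ hx)
      (Der.rcdI (a := lblGet) (M := .sel (.var 1) lblX) ?_ (Der.sel hs))
    · rfl
    · rfl

/-- ⊢ RecPoint : ω → κ₁ and x:Int ⊢ Y(Y RecPoint x) : σ₂
(the variable x is 5 here). -/
theorem recpoint_typing (Γ : ℕ → Ty) :
    Der Γ RecPoint (.arrow .omega kap1) ∧
    Der (Function.update Γ 5 IntTy)
      (.app Ycomb (.app (.app Ycomb RecPoint) (.var 5))) sig2 := by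
  refine ⟨recPointTyping Γ, ?_⟩
  set Γ₂ := Function.update Γ 5 IntTy with hΓ₂
  have h1 : Der Γ₂ (.app Ycomb RecPoint) kap1 :=
    yAppOmega (recPointTyping Γ₂)
  have hx : Der Γ₂ (.var 5) IntTy := by
    have := Der.var Γ₂ 5
    simpa [hΓ₂, Function.update] using this
  have h2 : Der Γ₂ (.app (.app Ycomb RecPoint) (.var 5))
      (.inter (.arrow .omega sig1) (.arrow sig1 sig2)) :=
    Der.appE h1 hx
  exact yApp h2
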